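/- Let D = (E, s, t) be a demi-matroid, |E| = n, and f harmonic of degree d on E with extension f̃. Define the harmonic Tutte polynomial T(D, f; x, y) = ∑_{X ⊆ E} f̃(X) (x−1)^{s(E)−s(X)} (y−1)^{|X|−s(X)}. Then T(D*, f; x, y) = (−1)^d · T(D, f; y, x), where D* = (E, t, s). -/
import Mathlib


open Finset

variable {ι : Type*} [Fintype ι] [DecidableEq ι]

/-- `f` is harmonic of degree `d`. -/
def IsHarmonic (d : ℕ) (f : Finset ι → ℝ) : Prop :=
  ∀ Y : Finset ι, Y.card + 1 = d →
    ∑ Z ∈ Finset.univ.filter (fun Z : Finset ι => Z.card = d ∧ Y ⊆ Z), f Z = 0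

/-- The extension `f̃(X) = ∑_{Z ⊆ X, |Z| = d} f(Z)`. -/
def tilde (d : ℕ) (f : Finset ι → ℝ) (X : Finset ι) : ℝ :=
  ∑ Z ∈ X.powerset.filter (fun Z : Finset ι => Z.card = d), f Z

/-- A demi-matroid on ground set `E = univ` with integer-valued functions. -/
def IsDemimatroidN (s t : Finset ι → ℕ) : Prop :=
  (∀ ⦃X Y : Finset ι⦄, X ⊆ Y →
      (s X ≤ s Y ∧ s Y ≤ Y.card) ∧ (t X ≤ t Y ∧ t Y ≤ Y.card)) ∧
  (∀ X : Finset ι, ((Xᶜ.card : ℤ) - s Xᶜ = (t Finset.univ : ℤ) - t X))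

/-- The harmonic Tutte polynomial
`T(D, f; x, y) = ∑_{X ⊆ E} f̃(X) (x-1)^{s(E)-s(X)} (y-1)^{|X|-s(X)}`
of the demi-matroid whose first function is `s`. -/
def harmTutte (s : Finset ι → ℕ) (d : ℕ) (f : Finset ι → ℝ) (x y : ℝ) : ℝ :=
  ∑ X : Finset ι,
    tilde d f X * (x - 1) ^ (s Finset.univ - s X) * (y - 1) ^ (X.card - s X)

set_option linter.unusedSectionVars false

lemma my_swap (p : Finset ι → Prop) (q : Finset ι → Finset ι → Prop)
    [DecidablePred p] [∀ Y, DecidablePred (q Y)] (g : Finset ι → ℝ) :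
    ∑ Y ∈ univ.filter p, ∑ Z ∈ univ.filter (q Y), g Z
      = ∑ Z : Finset ι, ((univ.filter (fun Y => p Y ∧ q Y Z)).card : ℝ) * g Z := by
  rw [Finset.sum_filter]
  have h1 : ∀ Y : Finset ι, (if p Y then ∑ Z ∈ univ.filter (q Y), g Z else 0)
      = ∑ Z : Finset ι, if p Y ∧ q Y Z then g Z else 0 := by
    intro Y
    by_cases hp : p Y
    · simp [hp, Finset.sum_filter]
    · simp [hp]
  rw [Finset.sum_congr rfl (fun Y _ => h1 Y), Finset.sum_comm]
  refine Finset.sum_congr rfl (fun Z _ => ?_)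
  rw [← Finset.sum_filter, Finset.sum_const, nsmul_eq_mul]

lemma erase_inter' (Z X : Finset ι) (e : ι) : (Z.erase e) ∩ X = (Z ∩ X).erase e := by
  ext x; simp [mem_erase, mem_inter]

lemma tilde_compl {d : ℕ} {f : Finset ι → ℝ} (hf : IsHarmonic d f) (X : Finset ι) :
    tilde d f Xᶜ = (-1 : ℝ) ^ d * tilde d f X := by
  classical
  set a : ℕ → ℝ := fun j =>
    ∑ Z ∈ univ.filter (fun Z : Finset ι => Z.card = d ∧ (Z ∩ X).card = j), f Z with ha
  have hX : tilde d f X = a d := by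
    rw [tilde, ha]
    refine Finset.sum_congr ?_ (fun _ _ => rfl)
    ext Z
    simp only [mem_filter, mem_powerset, mem_univ, true_and]
    constructor
    · rintro ⟨hZX, hZd⟩
      exact ⟨hZd, by rw [Finset.inter_eq_left.mpr hZX, hZd]⟩
    · rintro ⟨hZd, hj⟩
      refine ⟨?_, hZd⟩
      have : Z ∩ X = Z :=
        Finset.eq_of_subset_of_card_le Finset.inter_subset_left (by rw [hj, hZd])
      exact Finset.inter_eq_left.mp this
  have hXc : tilde d f Xᶜ = a 0 := by
    rw [tilde, ha]
    refine Finset.sum_congr ?_ (fun _ _ => rfl)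
    ext Z
    simp only [mem_filter, mem_powerset, mem_univ, true_and, Finset.card_eq_zero]
    constructor
    · rintro ⟨hZX, hZd⟩
      refine ⟨hZd, ?_⟩
      rw [← Finset.disjoint_iff_inter_eq_empty]
      refine Finset.disjoint_left.mpr ?_
      intro x hx hx'
      exact (Finset.mem_compl.mp (hZX hx)) hx'
    · rintro ⟨hZd, hj⟩
      refine ⟨?_, hZd⟩
      rw [← Finset.disjoint_iff_inter_eq_empty] at hj
      intro x hx
      exact Finset.mem_compl.mpr (fun hX' => (Finset.disjoint_left.mp hj hx) hX')
  have hrec : ∀ i, i < d → ((i : ℝ) + 1) * a (i + 1) + ((d - i : ℕ) : ℝ) * a i = 0 := by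
    intro i hi
    have h0 : ∑ Y ∈ univ.filter (fun Y : Finset ι => Y.card = d - 1 ∧ (Y ∩ X).card = i),
        ∑ Z ∈ univ.filter (fun Z : Finset ι => Z.card = d ∧ Y ⊆ Z), f Z = 0 := by
      refine Finset.sum_eq_zero (fun Y hY => ?_)
      simp only [mem_filter] at hY
      exact hf Y (by omega)
    rw [my_swap (fun Y => Y.card = d - 1 ∧ (Y ∩ X).card = i)
      (fun Y Z => Z.card = d ∧ Y ⊆ Z) f] at h0
    have hcount : ∀ Z : Finset ι, Z.card = d →
        (univ.filter (fun Y => (Y.card = d - 1 ∧ (Y ∩ X).card = i) ∧ Z.card = d ∧ Y ⊆ Z)).card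
          = (if (Z ∩ X).card = i + 1 then i + 1 else 0)
            + (if (Z ∩ X).card = i then d - i else 0) := by
      intro Z hZ
      set j := (Z ∩ X).card with hj
      have hset : univ.filter (fun Y => (Y.card = d - 1 ∧ (Y ∩ X).card = i) ∧ Z.card = d ∧ Y ⊆ Z)
          = (Z.filter (fun e => ((Z ∩ X).erase e).card = i)).image (Z.erase ·) := by
        ext Y
        simp only [mem_filter, mem_univ, true_and, Finset.mem_image]
        constructor
        · rintro ⟨⟨hY1, hY2⟩, -, hYZ⟩
          have hcd : (Z \ Y).card = 1 := by
            rw [Finset.card_sdiff_of_subset hYZ, hZ, hY1]; omega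
          obtain ⟨e, he⟩ := Finset.card_eq_one.mp hcd
          have heZ : e ∈ Z := by
            have : e ∈ Z \ Y := by rw [he]; exact Finset.mem_singleton_self e
            exact (Finset.mem_sdiff.mp this).1
          have hYe : Y = Z.erase e := by
            ext x
            simp only [Finset.mem_erase]
            constructor
            · intro hx
              refine ⟨?_, hYZ hx⟩
              rintro rfl
              have : x ∈ Z \ Y := by rw [he]; exact Finset.mem_singleton_self x
              exact (Finset.mem_sdiff.mp this).2 hx
            · rintro ⟨hne, hxZ⟩
              by_contra hxY
              have : x ∈ Z \ Y := Finset.mem_sdiff.mpr ⟨hxZ, hxY⟩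
              rw [he, Finset.mem_singleton] at this
              exact hne this
          refine ⟨e, ⟨heZ, ?_⟩, hYe.symm⟩
          rw [← erase_inter', ← hYe]; exact hY2
        · rintro ⟨e, he, rfl⟩
          obtain ⟨heZ, hec⟩ := he
          refine ⟨⟨?_, ?_⟩, hZ, Finset.erase_subset _ _⟩
          · rw [Finset.card_erase_of_mem heZ, hZ]
          · rw [erase_inter']; exact hec
      rw [hset, Finset.card_image_of_injOn]
      · have hsplit : Z.filter (fun e => ((Z ∩ X).erase e).card = i)
            = (Z ∩ X).filter (fun e => ((Z ∩ X).erase e).card = i)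
              ∪ (Z \ X).filter (fun e => ((Z ∩ X).erase e).card = i) := by
          rw [← Finset.filter_union]
          congr 1
          ext x; simp only [mem_union, mem_inter, mem_sdiff]; tauto
        rw [hsplit, Finset.card_union_of_disjoint]
        · have h1 : ((Z ∩ X).filter (fun e => ((Z ∩ X).erase e).card = i)).card
              = if j = i + 1 then i + 1 else 0 := by
            by_cases hji : j = i + 1
            · rw [if_pos hji, Finset.filter_true_of_mem, ← hj, hji]
              intro e he
              rw [Finset.card_erase_of_mem he, ← hj, hji]
              omega
            · rw [if_neg hji, Finset.card_eq_zero, Finset.filter_false_of_mem]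
              intro e he h
              rw [Finset.card_erase_of_mem he, ← hj] at h
              have : 1 ≤ j := Finset.card_pos.mpr ⟨e, he⟩
              omega
          have h2 : ((Z \ X).filter (fun e => ((Z ∩ X).erase e).card = i)).card
              = if j = i then d - i else 0 := by
            by_cases hji : j = i
            · rw [if_pos hji, Finset.filter_true_of_mem]
              · have := Finset.card_inter_add_card_sdiff Z X
                omega
              · intro e he
                rw [Finset.erase_eq_of_notMem, ← hj, hji]
                intro h
                exact (Finset.mem_sdiff.mp he).2 (Finset.mem_inter.mp h).2
            · rw [if_neg hji, Finset.card_eq_zero, Finset.filter_false_of_mem]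
              intro e he h
              rw [Finset.erase_eq_of_notMem, ← hj] at h
              · exact hji h
              · intro h'
                exact (Finset.mem_sdiff.mp he).2 (Finset.mem_inter.mp h').2
          rw [h1, h2]
        · refine Finset.disjoint_filter_filter ?_
          refine Finset.disjoint_left.mpr ?_
          intro x hx hx'
          exact (Finset.mem_sdiff.mp hx').2 (Finset.mem_inter.mp hx).2
      · intro e1 h1 e2 h2 heq
        have heq' : Z.erase e1 = Z.erase e2 := heq
        simp only [Finset.coe_filter, Set.mem_setOf_eq] at h1 h2
        by_contra hne
        have : e1 ∈ Z.erase e2 := Finset.mem_erase.mpr ⟨hne, h1.1⟩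
        rw [← heq'] at this
        exact (Finset.mem_erase.mp this).1 rfl
    have key : ∀ Z : Finset ι,
        ((univ.filter (fun Y => (Y.card = d - 1 ∧ (Y ∩ X).card = i) ∧ Z.card = d ∧ Y ⊆ Z)).card : ℝ)
            * f Z
        = (if Z.card = d ∧ (Z ∩ X).card = i + 1 then ((i + 1 : ℕ) : ℝ) * f Z else 0)
          + (if Z.card = d ∧ (Z ∩ X).card = i then ((d - i : ℕ) : ℝ) * f Z else 0) := by
      intro Z
      by_cases hZ : Z.card = d
      · rw [hcount Z hZ]
        by_cases h1 : (Z ∩ X).card = i + 1 <;> by_cases h2 : (Z ∩ X).card = i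
        · omega
        · simp [hZ, h1, h2]
        · simp [hZ, h1, h2]
        · simp [hZ, h1, h2]
      · rw [Finset.filter_false_of_mem (fun Y _ h => hZ h.2.1)]
        simp [hZ]
    rw [Finset.sum_congr rfl (fun Z _ => key Z), Finset.sum_add_distrib,
      ← Finset.sum_filter, ← Finset.sum_filter, ← Finset.mul_sum, ← Finset.mul_sum] at h0
    have ea : (∑ Z ∈ univ.filter (fun Z : Finset ι => Z.card = d ∧ (Z ∩ X).card = i + 1), f Z)
        = a (i + 1) := rfl
    have eb : (∑ Z ∈ univ.filter (fun Z : Finset ι => Z.card = d ∧ (Z ∩ X).card = i), f Z)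
        = a i := rfl
    rw [ea, eb] at h0
    push_cast at h0 ⊢
    linarith
  have hform : ∀ k, k ≤ d → a k = (-1 : ℝ) ^ k * (d.choose k : ℝ) * a 0 := by
    intro k
    induction k with
    | zero => intro _; simp
    | succ k ih =>
      intro hk
      have hkd : k < d := by omega
      have hr := hrec k hkd
      have hih := ih (by omega)
      have hcast : ((k : ℝ) + 1) * (d.choose (k + 1) : ℝ)
          = (d.choose k : ℝ) * ((d - k : ℕ) : ℝ) := by
        rw [mul_comm]
        exact_mod_cast congrArg (Nat.cast : ℕ → ℝ) (Nat.choose_succ_right_eq d k)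
      have hk1 : ((k : ℝ) + 1) ≠ 0 := by positivity
      apply mul_left_cancel₀ hk1
      rw [hih] at hr
      have hthis : ((k : ℝ) + 1) * a (k + 1)
          = -(((d - k : ℕ) : ℝ) * ((-1 : ℝ) ^ k * (d.choose k : ℝ) * a 0)) := by linarith
      rw [hthis, pow_succ]
      linear_combination ((-1 : ℝ) ^ k * a 0) * hcast
  rw [hXc, hX, hform d le_rfl, Nat.choose_self, Nat.cast_one, mul_one, ← mul_assoc,
    ← pow_add, ← two_mul, pow_mul, neg_one_sq, one_pow, one_mul]

/-- `T(D*, f; x, y) = (-1)^d T(D, f; y, x)` where `D* = (E, t, s)`. -/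
theorem stmt_13 (s t : Finset ι → ℕ) (hD : IsDemimatroidN s t)
    (d : ℕ) (f : Finset ι → ℝ) (hf : IsHarmonic d f) (x y : ℝ) :
    harmTutte t d f x y = (-1 : ℝ) ^ d * harmTutte s d f y x := by
  classical
  have ht0 : t ∅ = 0 := by
    have := (hD.1 (Finset.Subset.refl (∅ : Finset ι))).2.2
    simpa using this
  have hE : ((univ : Finset ι).card : ℤ) - s univ = (t univ : ℤ) - t ∅ := by
    have := hD.2 (∅ : Finset ι)
    simpa using this
  have expA : ∀ X : Finset ι, t univ - t Xᶜ = X.card - s X := by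
    intro X
    have hA : ((X.card : ℤ)) - s X = (t univ : ℤ) - t Xᶜ := by
      have := hD.2 Xᶜ
      rwa [compl_compl] at this
    have hsx : s X ≤ X.card := (hD.1 (Finset.Subset.refl X)).1.2
    have htc : t Xᶜ ≤ t univ := (hD.1 (Finset.subset_univ Xᶜ)).2.1
    omega
  have expB : ∀ X : Finset ι, Xᶜ.card - t Xᶜ = s univ - s X := by
    intro X
    have hA : ((X.card : ℤ)) - s X = (t univ : ℤ) - t Xᶜ := by
      have := hD.2 Xᶜ
      rwa [compl_compl] at this
    have hsU : s X ≤ s univ := (hD.1 (Finset.subset_univ X)).1.1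
    have htcc : t Xᶜ ≤ Xᶜ.card := (hD.1 (Finset.Subset.refl Xᶜ)).2.2
    have hcompl : Xᶜ.card = Fintype.card ι - X.card := Finset.card_compl X
    have hcu : (univ : Finset ι).card = Fintype.card ι := Finset.card_univ
    have hXle : X.card ≤ Fintype.card ι := Finset.card_le_univ X
    omega
  rw [harmTutte, harmTutte, Finset.mul_sum,
    ← Equiv.sum_comp (Function.Involutive.toPerm (compl : Finset ι → Finset ι) compl_involutive)
      (fun X : Finset ι =>
      tilde d f X * (x - 1) ^ (t univ - t X) * (y - 1) ^ (X.card - t X))]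
  simp only [Function.Involutive.coe_toPerm]
  refine Finset.sum_congr rfl (fun X _ => ?_)
  show tilde d f Xᶜ * (x - 1) ^ (t univ - t Xᶜ) * (y - 1) ^ (Xᶜ.card - t Xᶜ)
      = (-1 : ℝ) ^ d * (tilde d f X * (y - 1) ^ (s univ - s X) * (x - 1) ^ (X.card - s X))
  rw [tilde_compl hf X, expA X, expB X]
  ring
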